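/- Let ν ∈ (0,1), let ι be a finite index set with |ι| ≥ 2, and let m : ι → ℝ. Let x₁ be an index maximizing m over ι and x₂ an index maximizing m over ι \ {x₁}. Define the terminal value V_L(m) = max_{x∈ι} exp(m[x]) / Σ_{l∈ι} exp(m[l]). Then max_{a∈ι} ∫₀^∞ V_L( m + J(y)·δ_a ) · f(y|m,a) dy = ( exp(m[x₁]) + h(ν)·exp( (m[x₂] − ν·m[x₁]) / (1−ν) ) ) / Σ_{l∈ι} exp(m[l]), and this maximum is attained at a = x₂. -/

import Mathlib

open Real MeasureTheory Finset

set_option linter.unusedSectionVars false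

noncomputable section

variable {ι : Type*} [Fintype ι] [DecidableEq ι]

/-- The log-likelihood update function `J(y) = (1-ν)y + ln ν`. -/
def Jfun (ν y : ℝ) : ℝ := (1 - ν) * y + Real.log ν

/-- `h(ν) = exp(ν ln ν/(1-ν)) - exp(ln ν/(1-ν))`. -/
def hfun (ν : ℝ) : ℝ :=
  Real.exp (ν * Real.log ν / (1 - ν)) - Real.exp (Real.log ν / (1 - ν))

/-- `g(ν) = exp(ln ν/(1-ν)) (1/(ν+1) - ln ν/(1-ν))`. -/
def gfun (ν : ℝ) : ℝ :=
  Real.exp (Real.log ν / (1 - ν)) * (1 / (ν + 1) - Real.log ν / (1 - ν))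

/-- Kronecker delta `δ[a,x]` as a real number. -/
def kdelta (a x : ι) : ℝ := if x = a then 1 else 0

theorem univ_nonempty_of_card (hcard : 2 ≤ Fintype.card ι) :
    (Finset.univ : Finset ι).Nonempty := by
  rw [← Finset.card_pos]
  have : (Finset.univ : Finset ι).card = Fintype.card ι := rfl
  omega

theorem erase_nonempty_of_card (hcard : 2 ≤ Fintype.card ι) (a : ι) :
    ((Finset.univ : Finset ι).erase a).Nonempty := by
  rw [← Finset.card_pos, Finset.card_erase_of_mem (Finset.mem_univ a)]
  have : (Finset.univ : Finset ι).card = Fintype.card ι := rfl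
  omega

theorem pairs_nonempty_of_card (hcard : 2 ≤ Fintype.card ι) :
    ((Finset.univ : Finset (ι × ι)).filter fun p => p.1 ≠ p.2).Nonempty := by
  obtain ⟨a, b, hab⟩ := Fintype.exists_pair_of_one_lt_card (α := ι) (by omega)
  exact ⟨(a, b), by simp [hab]⟩

/-- `max_{â ≠ a} m[â]`. -/
def maxOther (hcard : 2 ≤ Fintype.card ι) (m : ι → ℝ) (a : ι) : ℝ :=
  ((Finset.univ : Finset ι).erase a).sup' (erase_nonempty_of_card hcard a) m

/-- `ξ(a; m)`. -/
def xi (ν : ℝ) (hcard : 2 ≤ Fintype.card ι) (m : ι → ℝ) (a : ι) : ℝ :=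
  if maxOther hcard m a - m a < Real.log ν then Real.exp (m a)
  else Real.exp (maxOther hcard m a)
    + hfun ν * Real.exp ((m a - ν * maxOther hcard m a) / (1 - ν))

/-- `min_{x_i ≠ x_j} (m[x_i] - ν m[x_j])`, over ordered pairs of distinct indices. -/
def minPair (ν : ℝ) (hcard : 2 ≤ Fintype.card ι) (m : ι → ℝ) : ℝ :=
  (((Finset.univ : Finset (ι × ι)).filter fun p => p.1 ≠ p.2).inf'
    (pairs_nonempty_of_card hcard)) (fun p => m p.1 - ν * m p.2)

/-- The feedback density `f(y | m, a) = b[a] ν e^{-νy} + (1-b[a]) e^{-y}`. -/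
def fdens (ν : ℝ) (m : ι → ℝ) (a : ι) (y : ℝ) : ℝ :=
  (Real.exp (m a) / ∑ l, Real.exp (m l)) * (ν * Real.exp (-ν * y))
    + (1 - Real.exp (m a) / ∑ l, Real.exp (m l)) * Real.exp (-y)

/-- Terminal value `V_L(m) = max_x exp(m[x]) / ∑_l exp(m[l])`. -/
def Vterm (hcard : 2 ≤ Fintype.card ι) (m : ι → ℝ) : ℝ :=
  ((Finset.univ : Finset ι).sup' (univ_nonempty_of_card hcard) fun x => Real.exp (m x))
    / ∑ l, Real.exp (m l)


/-!
Write `S = ∑ l, exp (m l)`, `u = m a` and `v = max_{x ≠ a} m x`. The normaliser of the updated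
belief cancels against the feedback density, so the integral `Q(a)` of the statement satisfies
`S · Q(a) = ∫₀^∞ max(e^{u + J(y)}, e^v) e^{-y} dy`.
Since `J` is increasing with `J(0) = ln ν`, this integral is `e^u` when `v ≤ u + ln ν` and
`e^v + h(ν) e^{(u - νv)/(1-ν)}` otherwise. It is increasing in `u`, which settles every `a ≠ x₁`.
For `a = x₁` one compares the pairs `(m x₁, m x₂)` and `(m x₂, m x₁)`: with `r = e^{v-u} ∈ [ν, 1]`
and `β = 1/(1-ν)` this is `r + h r^{1-β} ≤ 1 + h r^β`, true because the difference is concave in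
`r`, vanishes at `r = 1` and equals `h ν^β` at `r = ν`.
-/

section

variable {ν : ℝ}

lemma hfun_eq_rpow (hν0 : 0 < ν) (hν1 : ν < 1) :
    hfun ν = ν ^ ((1 - ν)⁻¹ - 1) - ν ^ (1 - ν)⁻¹ := by
  have : (1 - ν)⁻¹ - 1 = ν / (1 - ν) := by field_simp [(sub_pos.mpr hν1).ne']; ring
  rw [rpow_def_of_pos hν0, rpow_def_of_pos hν0, hfun, this]
  ring_nf

lemma hfun_pos (hν0 : 0 < ν) (hν1 : ν < 1) : 0 < hfun ν := by
  have hlog : log ν < 0 := log_neg hν0 hν1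
  rw [hfun, sub_pos, exp_lt_exp]
  exact div_lt_div_of_pos_right (by nlinarith) (by linarith)

lemma concaveOn_rpow_sub_rpow_one_sub {β : ℝ} (hβ : 1 ≤ β) :
    ConcaveOn ℝ (Set.Ioc 0 1) fun r : ℝ => r ^ β - r ^ (1 - β) := by
  have hpos : ∀ x ∈ interior (Set.Ioc (0:ℝ) 1), x ≠ 0 := by
    rw [interior_Ioc]; exact fun x hx => hx.1.ne'
  refine concaveOn_of_hasDerivWithinAt2_nonpos (convex_Ioc 0 1)
    (f' := fun r => β * r ^ (β - 1) - (1 - β) * r ^ (-β))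
    (f'' := fun r => β * ((β - 1) * r ^ (β - 2)) - (1 - β) * (-β * r ^ (-β - 1)))
    ?_ (fun x hx => ?_) (fun x hx => ?_) (fun x hx => ?_)
  · exact fun x hx => ((continuousAt_rpow_const x β (Or.inl hx.1.ne')).sub
      (continuousAt_rpow_const x (1 - β) (Or.inl hx.1.ne'))).continuousWithinAt
  · have h := (hasDerivAt_rpow_const (p := β) (Or.inl (hpos x hx))).sub
      (hasDerivAt_rpow_const (p := 1 - β) (Or.inl (hpos x hx)))
    rw [show 1 - β - 1 = -β by ring] at h
    exact h.hasDerivWithinAt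
  · have h := ((hasDerivAt_rpow_const (p := β - 1) (Or.inl (hpos x hx))).const_mul β).sub
      ((hasDerivAt_rpow_const (p := -β) (Or.inl (hpos x hx))).const_mul (1 - β))
    rw [show β - 1 - 1 = β - 2 by ring] at h
    exact h.hasDerivWithinAt
  · rw [interior_Ioc] at hx
    have hrpow : x ^ (β - 2) ≤ x ^ (-β - 1) :=
      rpow_le_rpow_of_exponent_ge hx.1 hx.2.le (by linarith)
    have hcoef : 0 ≤ β * (β - 1) := mul_nonneg (by linarith) (by linarith)
    nlinarith [mul_le_mul_of_nonneg_left hrpow hcoef]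

lemma rpow_add_hfun_mul_rpow_le {r : ℝ} (hν0 : 0 < ν) (hν1 : ν < 1) (hr : r ∈ Set.Icc ν 1) :
    r + hfun ν * r ^ (1 - (1 - ν)⁻¹) ≤ 1 + hfun ν * r ^ (1 - ν)⁻¹ := by
  set β := (1 - ν)⁻¹
  have hβ : 1 ≤ β := (one_le_inv₀ (by linarith)).mpr (by linarith)
  set φ : ℝ → ℝ := fun r => 1 - r + hfun ν * (r ^ β - r ^ (1 - β))
  have hφ : ConcaveOn ℝ (Set.Ioc 0 1) φ :=
    ((concaveOn_const 1 (convex_Ioc 0 1)).sub (convexOn_id (convex_Ioc 0 1))).add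
      ((concaveOn_rpow_sub_rpow_one_sub hβ).smul (hfun_pos hν0 hν1).le)
  have hφν : 0 ≤ φ ν := by
    have : hfun ν * ν ^ (1 - β) = 1 - ν := by
      rw [hfun_eq_rpow hν0 hν1, sub_mul, ← rpow_add hν0, ← rpow_add hν0]
      simp [β]
    have := mul_nonneg (hfun_pos hν0 hν1).le (rpow_nonneg hν0.le β)
    simp only [φ]
    linarith
  have hφ1 : φ 1 = 0 := by simp [φ]
  have := hφ.min_le_of_mem_Icc ⟨hν0, hν1.le⟩ ⟨one_pos, le_rfl⟩ hr
  simp only [hφ1, min_eq_right hφν, φ] at this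
  linarith

lemma exp_add_hfun_mul_exp_le (hν0 : 0 < ν) (hν1 : ν < 1) {u v : ℝ} (hvu : v ≤ u)
    (hlog : log ν ≤ v - u) :
    exp v + hfun ν * exp ((u - ν * v) / (1 - ν))
      ≤ exp u + hfun ν * exp ((v - ν * u) / (1 - ν)) := by
  have h1ν : 1 - ν ≠ 0 := (sub_pos.mpr hν1).ne'
  have hr : exp (v - u) ∈ Set.Icc ν 1 :=
    ⟨by simpa [exp_log hν0] using exp_le_exp.mpr hlog, exp_le_one_iff.mpr (by linarith)⟩
  have key := mul_le_mul_of_nonneg_left (rpow_add_hfun_mul_rpow_le hν0 hν1 hr) (exp_pos u).le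
  simp only [rpow_def_of_pos (exp_pos _), log_exp, mul_add, ← mul_assoc,
    mul_comm (exp u) (hfun ν), mul_one] at key
  simp only [mul_assoc, ← exp_add] at key
  rwa [show u + (v - u) = v by ring,
    show u + (v - u) * (1 - (1 - ν)⁻¹) = (u - ν * v) / (1 - ν) by field_simp; ring,
    show u + (v - u) * (1 - ν)⁻¹ = (v - ν * u) / (1 - ν) by field_simp; ring] at key

lemma Jfun_mono (hν1 : ν < 1) : Monotone (Jfun ν) := fun _ _ h => by
  unfold Jfun; nlinarith

lemma exp_add_Jfun_mul_exp_neg (u y : ℝ) :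
    exp (u + Jfun ν y) * exp (-y) = exp (u + log ν) * exp (-ν * y) := by
  rw [← exp_add, ← exp_add, Jfun]; ring_nf

lemma integral_exp_add_Jfun_mul_exp_neg_Ioi (hν0 : 0 < ν) (u t : ℝ) :
    ∫ y in Set.Ioi t, exp (u + Jfun ν y) * exp (-y) = exp (u - ν * t) := by
  simp_rw [exp_add_Jfun_mul_exp_neg]
  rw [integral_const_mul, integral_exp_mul_Ioi (neg_lt_zero.mpr hν0), exp_add, exp_log hν0,
    sub_eq_add_neg, exp_add]
  field_simp

lemma integrableOn_max_exp_add_Jfun_mul_exp_neg (hν0 : 0 < ν) (u v : ℝ) :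
    IntegrableOn (fun y => max (exp (u + Jfun ν y)) (exp v) * exp (-y)) (Set.Ioi 0) := by
  simp_rw [max_mul_of_nonneg _ _ (exp_pos _).le, exp_add_Jfun_mul_exp_neg]
  refine Integrable.sup ((exp_neg_integrableOn_Ioi 0 hν0).const_mul _) ?_
  simpa using (exp_neg_integrableOn_Ioi 0 one_pos).const_mul (exp v)

def qIntegral (ν u v : ℝ) : ℝ :=
  ∫ y in Set.Ioi 0, max (exp (u + Jfun ν y)) (exp v) * exp (-y)

lemma qIntegral_of_le (hν0 : 0 < ν) (hν1 : ν < 1) {u v : ℝ} (h : v ≤ u + log ν) :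
    qIntegral ν u v = exp u := by
  have hmax : ∀ y ∈ Set.Ioi (0:ℝ),
      max (exp (u + Jfun ν y)) (exp v) * exp (-y) = exp (u + Jfun ν y) * exp (-y) := by
    intro y hy
    have : 0 ≤ (1 - ν) * y := mul_nonneg (by linarith) (le_of_lt hy)
    rw [max_eq_left (exp_le_exp.mpr (by rw [Jfun]; linarith))]
  rw [qIntegral, setIntegral_congr_fun measurableSet_Ioi hmax,
    integral_exp_add_Jfun_mul_exp_neg_Ioi hν0, mul_zero, sub_zero]

lemma qIntegral_of_ge (hν0 : 0 < ν) (hν1 : ν < 1) {u v : ℝ} (h : u + log ν ≤ v) :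
    qIntegral ν u v = exp v + hfun ν * exp ((u - ν * v) / (1 - ν)) := by
  have h1ν : 0 < 1 - ν := sub_pos.mpr hν1
  set t := (v - u - log ν) / (1 - ν) with ht
  have ht0 : 0 ≤ t := div_nonneg (by linarith) h1ν.le
  have hcross : u + Jfun ν t = v := by rw [Jfun, ht]; field_simp; ring
  have hbelow : ∀ y ∈ Set.Ioc 0 t,
      max (exp (u + Jfun ν y)) (exp v) * exp (-y) = exp v * exp (-y) := by
    intro y hy
    rw [max_eq_right (exp_le_exp.mpr (by linarith [Jfun_mono hν1 hy.2]))]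
  have habove : ∀ y ∈ Set.Ioi t,
      max (exp (u + Jfun ν y)) (exp v) * exp (-y) = exp (u + Jfun ν y) * exp (-y) := by
    intro y hy
    rw [max_eq_left (exp_le_exp.mpr (by linarith [Jfun_mono hν1 (le_of_lt hy)]))]
  have hint := integrableOn_max_exp_add_Jfun_mul_exp_neg hν0 u v
  rw [qIntegral, ← Set.Ioc_union_Ioi_eq_Ioi ht0, setIntegral_union (Set.Ioc_disjoint_Ioi le_rfl)
      measurableSet_Ioi (hint.mono_set Set.Ioc_subset_Ioi_self)
      (hint.mono_set (Set.Ioi_subset_Ioi ht0)),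
    setIntegral_congr_fun measurableSet_Ioc hbelow, setIntegral_congr_fun measurableSet_Ioi habove,
    integral_exp_add_Jfun_mul_exp_neg_Ioi hν0, integral_const_mul,
    ← intervalIntegral.integral_of_le ht0, intervalIntegral.integral_comp_neg exp, integral_exp,
    neg_zero, exp_zero, hfun, sub_mul, mul_sub, ← exp_add, ← exp_add, ← exp_add]
  rw [show v + -t = log ν / (1 - ν) + (u - ν * v) / (1 - ν) by rw [ht]; field_simp; ring,
    show u - ν * t = ν * log ν / (1 - ν) + (u - ν * v) / (1 - ν) by rw [ht]; field_simp; ring]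
  ring

lemma qIntegral_mono (hν0 : 0 < ν) {u u' : ℝ} (v : ℝ) (hu : u ≤ u') :
    qIntegral ν u v ≤ qIntegral ν u' v :=
  setIntegral_mono_on (integrableOn_max_exp_add_Jfun_mul_exp_neg hν0 u v)
    (integrableOn_max_exp_add_Jfun_mul_exp_neg hν0 u' v) measurableSet_Ioi fun y _ => by gcongr

lemma qIntegral_le_swap (hν0 : 0 < ν) (hν1 : ν < 1) {u v : ℝ} (hvu : v ≤ u) :
    qIntegral ν u v ≤ qIntegral ν v u := by
  have hlog : log ν < 0 := log_neg hν0 hν1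
  rw [qIntegral_of_ge hν0 hν1 (by linarith : v + log ν ≤ u)]
  rcases le_total v (u + log ν) with hsep | hclose
  · rw [qIntegral_of_le hν0 hν1 hsep]
    exact le_add_of_nonneg_right (mul_nonneg (hfun_pos hν0 hν1).le (exp_pos _).le)
  · rw [qIntegral_of_ge hν0 hν1 hclose]
    exact exp_add_hfun_mul_exp_le hν0 hν1 hvu (by linarith)

variable (hcard : 2 ≤ Fintype.card ι)

lemma maxOther_eq {m : ι → ℝ} {a b : ι} (hba : b ≠ a) (hb : ∀ x, x ≠ a → m x ≤ m b) :
    maxOther hcard m a = m b :=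
  le_antisymm (Finset.sup'_le _ _ fun x hx => hb x (Finset.ne_of_mem_erase hx))
    (Finset.le_sup' m (Finset.mem_erase.mpr ⟨hba, Finset.mem_univ b⟩))

lemma sup'_exp_eq_max_exp_maxOther {m m' : ι → ℝ} {a : ι} (hoff : ∀ x, x ≠ a → m' x = m x) :
    Finset.univ.sup' (univ_nonempty_of_card hcard) (fun x => exp (m' x))
      = max (exp (m' a)) (exp (maxOther hcard m a)) := by
  have hexp : exp (maxOther hcard m a)
      = (Finset.univ.erase a).sup' (erase_nonempty_of_card hcard a) (fun x => exp (m' x)) := by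
    rw [maxOther, Finset.apply_sup'_eq_sup'_comp _ exp fun _ _ => exp_monotone.map_max]
    exact Finset.sup'_congr _ rfl fun x hx => by simp [hoff x (Finset.ne_of_mem_erase hx)]
  rw [hexp]
  exact (Finset.sup'_congr _ (Finset.insert_erase (Finset.mem_univ a)).symm fun _ _ => rfl).trans
    (Finset.sup'_insert _ _)

lemma kdelta_self (a : ι) : kdelta a a = 1 := if_pos rfl

lemma kdelta_of_ne {a x : ι} (h : x ≠ a) : kdelta a x = 0 := if_neg h

lemma sum_exp_update (m : ι → ℝ) (a : ι) (c : ℝ) :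
    ∑ l, exp (m l + c * kdelta a l) = ∑ l, exp (m l) - exp (m a) + exp (m a + c) := by
  have hoff : ∀ l ∈ Finset.univ.erase a, exp (m l + c * kdelta a l) = exp (m l) := fun l hl => by
    rw [kdelta_of_ne (Finset.ne_of_mem_erase hl), mul_zero, add_zero]
  rw [← Finset.add_sum_erase _ _ (Finset.mem_univ a), Finset.sum_congr rfl hoff,
    Finset.sum_erase_eq_sub (Finset.mem_univ a), kdelta_self, mul_one]
  ring

lemma Vterm_update_mul_fdens (hν0 : 0 < ν) (m : ι → ℝ) (a : ι) (y : ℝ) :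
    Vterm hcard (fun x => m x + Jfun ν y * kdelta a x) * fdens ν m a y
      = max (exp (m a + Jfun ν y)) (exp (maxOther hcard m a)) * exp (-y) / ∑ l, exp (m l) := by
  have hS : 0 < ∑ l, exp (m l) :=
    Finset.sum_pos (fun l _ => exp_pos _) (univ_nonempty_of_card hcard)
  have hS' : 0 < ∑ l, exp (m l + Jfun ν y * kdelta a l) :=
    Finset.sum_pos (fun l _ => exp_pos _) (univ_nonempty_of_card hcard)
  have hfdens : fdens ν m a y
      = exp (-y) * (∑ l, exp (m l + Jfun ν y * kdelta a l)) / ∑ l, exp (m l) := by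
    have := exp_add_Jfun_mul_exp_neg (ν := ν) (m a) y
    rw [exp_add (m a) (log ν), exp_log hν0] at this
    rw [fdens, sum_exp_update, mul_add, mul_comm (exp (-y)) (exp (_ + _)), this]
    field_simp
    ring
  rw [Vterm, sup'_exp_eq_max_exp_maxOther hcard (m := m) (a := a)
    (fun x hx => by rw [kdelta_of_ne hx, mul_zero, add_zero]), hfdens, kdelta_self, mul_one]
  field_simp

lemma integral_Vterm_update_mul_fdens (hν0 : 0 < ν) (m : ι → ℝ) (a : ι) :
    ∫ y in Set.Ioi 0, Vterm hcard (fun x => m x + Jfun ν y * kdelta a x) * fdens ν m a y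
      = qIntegral ν (m a) (maxOther hcard m a) / ∑ l, exp (m l) := by
  simp_rw [Vterm_update_mul_fdens hcard hν0, qIntegral, integral_div]

end

/-- the one-step Q-value is maximized at the second-best index `x₂`, and the
maximum equals `(exp(m[x₁]) + h(ν) exp((m[x₂] - ν m[x₁])/(1-ν))) / ∑_l exp(m[l])`. -/
theorem oneStep_Q_max_at_secondBest
    (ν : ℝ) (hν : ν ∈ Set.Ioo (0:ℝ) 1)
    (hcard : 2 ≤ Fintype.card ι) (m : ι → ℝ)
    (x₁ x₂ : ι) (hx₁ : ∀ x, m x ≤ m x₁) (hne : x₂ ≠ x₁)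
    (hx₂ : ∀ x, x ≠ x₁ → m x ≤ m x₂) :
    (∀ a : ι,
        (∫ y in Set.Ioi (0:ℝ),
            Vterm hcard (fun x => m x + Jfun ν y * kdelta a x) * fdens ν m a y)
          ≤ ∫ y in Set.Ioi (0:ℝ),
              Vterm hcard (fun x => m x + Jfun ν y * kdelta x₂ x) * fdens ν m x₂ y)
    ∧ (∫ y in Set.Ioi (0:ℝ),
          Vterm hcard (fun x => m x + Jfun ν y * kdelta x₂ x) * fdens ν m x₂ y)
        = (Real.exp (m x₁) + hfun ν * Real.exp ((m x₂ - ν * m x₁) / (1 - ν)))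
            / ∑ l, Real.exp (m l) := by
  obtain ⟨hν0, hν1⟩ := hν
  have hmax_of_ne : ∀ a, a ≠ x₁ → maxOther hcard m a = m x₁ :=
    fun a ha => maxOther_eq hcard ha.symm fun x _ => hx₁ x
  simp_rw [integral_Vterm_update_mul_fdens hcard hν0, hmax_of_ne x₂ hne]
  refine ⟨fun a => div_le_div_of_nonneg_right ?_ (by positivity), ?_⟩
  · by_cases ha : a = x₁
    · rw [ha, maxOther_eq hcard hne hx₂]
      exact qIntegral_le_swap hν0 hν1 (hx₁ x₂)
    · rw [hmax_of_ne a ha]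
      exact qIntegral_mono hν0 _ (hx₂ a ha)
  · rw [qIntegral_of_ge hν0 hν1 (by linarith [hx₁ x₂, log_neg hν0 hν1])]

end
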